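/- The word c occurs in the infinite fixed point m^ω(0) only at positions divisible by 95; that is, if c occurs in m^ω(0) starting at position n, then n ≡ 0 (mod 95). -/

import Mathlib

/-- `t` occurs at position `n` in the infinite word `w`. -/
def OccursAt {A : Type*} (t : List A) (w : ℕ → A) (n : ℕ) : Prop :=
  ∀ i, (h : i < t.length) → w (n + i) = t.get ⟨i, h⟩

/-- `t` is a factor of the infinite word `w`. -/
def IsFactor {A : Type*} (t : List A) (w : ℕ → A) : Prop :=
  ∃ n, OccursAt t w n

/-- The common prefix of length 48 of the images of `m`. -/
def cword : List (Fin 5) := [0,2,4,1,3,0,1,2,4,0,2,3,0,1,3,0,2,4,1,3,4,1,2,4,0,2,3,4,1,3,0,2,4,1,3,4,1,2,4,0,2,3,0,1,3,0,2,4]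

/-- The 95-uniform morphism `m`. -/
def m : Fin 5 → List (Fin 5) :=
  ![cword ++ [1,3,0,1,2,4,0,2,3,0,1,3,0,2,4,0,2,3,0,1,2,4,0,2,4,1,3,4,1,2,4,0,2,3,0,1,3,0,2,4,0,2,3,0,1,2,4],
    cword ++ [0,2,3,0,1,2,4,0,2,4,1,3,0,1,2,4,0,2,3,0,1,3,0,2,4,0,2,3,4,1,2,4,0,2,4,1,3,4,1,2,4,0,2,3,0,1,3],
    cword ++ [0,2,3,4,1,2,4,0,2,4,1,3,0,1,2,4,0,2,3,4,1,3,0,2,4,1,3,0,1,2,4,0,2,3,0,1,3,0,2,4,0,2,3,0,1,2,4],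
    cword ++ [1,3,0,1,2,4,0,2,3,0,1,3,0,2,4,0,2,3,0,1,2,4,0,2,4,1,3,4,1,2,4,0,2,3,0,1,3,0,2,4,0,2,3,4,1,2,4],
    cword ++ [0,2,3,4,1,2,4,0,2,4,1,3,0,1,2,4,0,2,3,0,1,3,0,2,4,0,2,3,4,1,2,4,0,2,4,1,3,4,1,2,4,0,2,3,0,1,3]]


/-- The iterates `m^k(0)`. -/
def mIter : ℕ → List (Fin 5)
  | 0 => [0]
  | k + 1 => (mIter k).flatMap m

/-- The infinite fixed point `m^ω(0)`. Since `m(0)` starts with the letter `0`,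
each `mIter k` is a prefix of `mIter (k+1)`, and `mIter (n+1)` has length
`95 ^ (n+1) > n`, so this is the limit word. -/
def mWord (n : ℕ) : Fin 5 := (mIter (n + 1)).getD n 0


lemma mlen (a : Fin 5) : (m a).length = 95 := by fin_cases a <;> rfl

lemma flatMap_len (l : List (Fin 5)) : (l.flatMap m).length = 95 * l.length := by
  induction l with
  | nil => rfl
  | cons x xs ih => simp [List.flatMap_cons, mlen, ih]; ring

lemma mIter_len (k : ℕ) : (mIter k).length = 95 ^ k := by
  induction k with
  | zero => rfl
  | succ k ih => rw [mIter, flatMap_len, ih, pow_succ, Nat.mul_comm]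

lemma fgetD : ∀ (l : List (Fin 5)) (q r : ℕ), r < 95 → q < l.length →
    (l.flatMap m).getD (95*q+r) 0 = (m (l.getD q 0)).getD r 0 := by
  intro l
  induction l with
  | nil => intro q r _ hq; simp at hq
  | cons x xs ih =>
    intro q r hr hq
    cases q with
    | zero =>
      rw [List.flatMap_cons]
      simp only [Nat.mul_zero, Nat.zero_add]
      rw [List.getD_append _ _ _ _ (by rw [mlen]; exact hr)]
      rfl
    | succ q =>
      rw [List.flatMap_cons]
      rw [List.getD_append_right _ _ _ _ (by rw [mlen]; omega)]
      have : 95 * (q + 1) + r - (m x).length = 95 * q + r := by rw [mlen]; omega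
      rw [this]
      exact ih q r hr (by simpa using hq)

lemma mIter_prefix (k : ℕ) : mIter k <+: mIter (k+1) := by
  induction k with
  | zero => exact ⟨(m 0).drop 1, by decide⟩
  | succ k ih =>
    obtain ⟨t, ht⟩ := ih
    exact ⟨t.flatMap m, by rw [mIter, mIter, ← ht, ← List.flatMap_append, ht]⟩

lemma mIter_prefix_le {k j : ℕ} (h : k ≤ j) : mIter k <+: mIter j := by
  induction j with
  | zero => simpa [Nat.le_zero.mp h]
  | succ j ih =>
    rcases Nat.lt_or_ge k (j+1) with h' | h'
    · exact (ih (by omega)).trans (mIter_prefix j)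
    · have : k = j + 1 := by omega
      simp [this]

lemma getD_agree {k j n : ℕ} (hk : n < 95 ^ k) (_hj : n < 95 ^ j) :
    (mIter k).getD n 0 = (mIter j).getD n 0 := by
  rcases Nat.le_total k j with h | h
  · obtain ⟨t, ht⟩ := mIter_prefix_le h
    rw [← ht, List.getD_append _ _ _ _ (by rw [mIter_len]; exact hk)]
  · obtain ⟨t, ht⟩ := mIter_prefix_le h
    rw [← ht, List.getD_append _ _ _ _ (by rw [mIter_len]; exact _hj)]

lemma lt_pow_big (n : ℕ) : n < 95 ^ (n + 1) :=
  lt_of_lt_of_le (Nat.lt_pow_self (n := n) (by norm_num))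
    (Nat.pow_le_pow_right (by norm_num) n.le_succ)

lemma mWord_mul_add (q r : ℕ) (hr : r < 95) :
    mWord (95 * q + r) = (m (mWord q)).getD r 0 := by
  have hq1 : q + 1 ≤ 95 ^ (q + 1) := le_of_lt (Nat.lt_pow_self (n := q+1) (by norm_num))
  have hb : 95 * q + r < 95 ^ (q + 2) := by
    calc 95 * q + r < 95 * (q + 1) := by omega
    _ ≤ 95 * 95 ^ (q + 1) := Nat.mul_le_mul_left 95 hq1
    _ = 95 ^ (q + 2) := by ring
  have h1 : mWord (95 * q + r) = (mIter (q + 2)).getD (95 * q + r) 0 :=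
    getD_agree (lt_pow_big _) hb
  rw [h1, show mIter (q+2) = (mIter (q+1)).flatMap m from rfl,
    fgetD _ q r hr (by rw [mIter_len]; exact lt_pow_big q)]
  rfl

lemma check : ∀ a b : Fin 5, ∀ r : Fin 95, r.1 ≠ 0 →
    ((m a ++ m b).drop r.1).take 48 ≠ cword := by decide

/-- The word `c` occurs in `m^ω(0)` only at positions divisible by 95. -/
theorem cword_occurrences (n : ℕ) (h : OccursAt cword mWord n) :
    n % 95 = 0 := by
  by_contra hr0
  set q := n / 95 with hq
  set r := n % 95 with hrdef
  have hr : r < 95 := Nat.mod_lt _ (by norm_num)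
  have hn : n = 95 * q + r := (Nat.div_add_mod n 95).symm
  set a := mWord q with ha
  set b := mWord (q + 1) with hb
  set w := m a ++ m b with hw
  have hwlen : w.length = 190 := by rw [hw, List.length_append, mlen, mlen]
  have hpt : ∀ i, (hi : i < 48) → w.getD (r + i) 0 = cword.get ⟨i, hi⟩ := by
    intro i hi
    have hocc := h i (by simpa [cword] using hi)
    rcases Nat.lt_or_ge (r + i) 95 with hlt | hge
    · have : n + i = 95 * q + (r + i) := by omega
      rw [this, mWord_mul_add q (r + i) hlt] at hocc
      rw [hw, List.getD_append _ _ _ _ (by rw [mlen]; exact hlt)]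
      exact hocc.trans (by congr 1)
    · have : n + i = 95 * (q + 1) + (r + i - 95) := by omega
      rw [this, mWord_mul_add (q + 1) (r + i - 95) (by omega)] at hocc
      rw [hw, List.getD_append_right _ _ _ _ (by rw [mlen]; exact hge)]
      rw [mlen]
      exact hocc.trans (by congr 1)
  have heq : (w.drop r).take 48 = cword := by
    apply List.ext_getElem
    · rw [List.length_take, List.length_drop, hwlen]
      simp [cword]; omega
    · intro i h1 h2
      have hi48 : i < 48 := by
        rw [List.length_take, List.length_drop, hwlen] at h1; omega
      have hri : r + i < w.length := by omega
      rw [List.getElem_take, List.getElem_drop]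
      have := hpt i hi48
      rw [List.getD_eq_getElem _ _ hri] at this
      rw [this]
      rfl
  exact check a b ⟨r, hr⟩ hr0 heq
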